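/- Let R be a commutative ring, e ≥ 1 an integer, A := R[X]/(X^e), and π the image of X in A. Let E be a finite free A-module, E' an A-module, and V : E → E' an additive map satisfying V(π·x) = π·V(x) for all x ∈ E. Let 0 = G^{[0]} ⊆ G^{[1]} ⊆ ⋯ ⊆ G^{[e]} ⊆ E' be a chain of R-submodules with π·G^{[j]} ⊆ G^{[j−1]} for all 1 ≤ j ≤ e, and assume V(E) ⊆ G^{[e]}. Fix 1 ≤ j ≤ e and let x ∈ E be an element killed by π^j. Then: (i) there exists y ∈ E with π^{e−1}·y = π^{j−1}·x; (ii) for every such y, one has V(x) − π^{e−j}·V(y) ∈ G^{[j−1]}. (This is the factorization of the partial Hasse maps through the primitive Hasse maps: on the graded piece containing x, the map induced by V equals the composite of multiplication by π^{j−1}, the primitive Hasse map given by division by π^{e−1} followed by V, and multiplication by π^{e−j}; consequently the partial Hasse invariant ha^{[j]} is the product of the primitive Hasse invariants.) -/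

import Mathlib

/-- The ring `A = R[X]/(X^e)`. -/
abbrev TruncPoly (R : Type*) [CommRing R] (e : ℕ) : Type _ :=
  Polynomial R ⧸ Ideal.span {(Polynomial.X : Polynomial R) ^ e}

/-- The image `π` of `X` in `A = R[X]/(X^e)`. -/
noncomputable def piX (R : Type*) [CommRing R] (e : ℕ) : TruncPoly R e :=
  Ideal.Quotient.mk _ Polynomial.X

/-!
The kernel of `π^k` on `A = R[X]/(X^e)` is `π^(e-k)A`, because `X^k` is a non-zero-divisor in
`R[X]`; flatness of `E` (via the equational criterion) carries this over to `E`. Hence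
`x = π^(e-j) z` and `y = z + π w`, so that `V x - π^(e-j) V y = -π^(e-j+1) V w`, which lies in
`G^{[j-1]}` because `V w ∈ G^{[e]}` and each `π` lowers the filtration index by one.
-/

open Polynomial

theorem piX_pow_dvd_of_piX_pow_mul_eq_zero {R : Type*} [CommRing R] {e k : ℕ} (hk : k ≤ e)
    {a : TruncPoly R e} (h : piX R e ^ k * a = 0) : piX R e ^ (e - k) ∣ a := by
  obtain ⟨f, rfl⟩ := Ideal.Quotient.mk_surjective a
  have hdvd : (X : R[X]) ^ k * X ^ (e - k) ∣ X ^ k * f := by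
    rw [← pow_add, Nat.add_sub_cancel' hk, ← Ideal.mem_span_singleton,
      ← Ideal.Quotient.eq_zero_iff_mem, map_mul, map_pow]
    exact h
  rw [piX, ← map_pow]
  exact map_dvd _ ((monic_X_pow k).isRegular.left.dvd_cancel_left.mp hdvd)

theorem Module.Flat.exists_smul_eq_of_smul_eq_zero {A E : Type*} [CommRing A] [AddCommGroup E]
    [Module A E] [Module.Flat A E] {a b : A} (hab : ∀ c : A, a * c = 0 → b ∣ c) {x : E}
    (hx : a • x = 0) : ∃ z : E, b • z = x := by
  obtain ⟨k, c, y, hxy, hc⟩ := isTrivialRelation_of_sum_smul_eq_zero (ι := Unit)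
    (f := fun _ ↦ a) (x := fun _ ↦ x) (by simpa using hx)
  choose d hd using fun i ↦ hab (c () i) (by simpa using hc i)
  refine ⟨∑ i, d i • y i, ?_⟩
  simp only [hxy (), Finset.smul_sum, smul_smul, hd]

theorem map_pow_smul_of_map_smul {A M N : Type*} [Monoid A] [MulAction A M] [MulAction A N]
    {f : M → N} {a : A} (hf : ∀ x, f (a • x) = a • f x) (n : ℕ) (x : M) :
    f (a ^ n • x) = a ^ n • f x := by
  simpa only [smul_iterate] using Function.Semiconj.iterate_right hf n x

theorem pow_smul_mem_of_smul_mem_pred {A M S : Type*} [Monoid A] [MulAction A M] [SetLike S M]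
    {G : ℕ → S} {a : A} {e : ℕ} (hG : ∀ j < e, ∀ x ∈ G (j + 1), a • x ∈ G j)
    {n m : ℕ} (hnm : n + m ≤ e) {x : M} (hx : x ∈ G (n + m)) : a ^ m • x ∈ G n := by
  induction m generalizing x with
  | zero => simpa using hx
  | succ m ih =>
    rw [pow_succ, mul_smul]
    exact ih (by omega) (hG (n + m) (by omega) x hx)

theorem partial_hasse_factors_through_primitive_hasse
    (R : Type*) [CommRing R] (e : ℕ)
    (E : Type*) [AddCommGroup E] [Module (TruncPoly R e) E]
    [Module.Free (TruncPoly R e) E]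
    (E' : Type*) [AddCommGroup E'] [Module (TruncPoly R e) E'] [Module R E']
    (V : E →+ E') (hV : ∀ x : E, V (piX R e • x) = piX R e • V x)
    (G : ℕ → Submodule R E')
    (hGπ : ∀ j < e, ∀ x ∈ G (j + 1), piX R e • x ∈ G j)
    (hVE : ∀ x : E, V x ∈ G e)
    (j : ℕ) (hj1 : 1 ≤ j) (hje : j ≤ e)
    (x : E) (hx : piX R e ^ j • x = 0) :
    (∃ y : E, piX R e ^ (e - 1) • y = piX R e ^ (j - 1) • x) ∧
    (∀ y : E, piX R e ^ (e - 1) • y = piX R e ^ (j - 1) • x →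
      V x - piX R e ^ (e - j) • V y ∈ G (j - 1)) := by
  set π := piX R e
  obtain ⟨z, rfl⟩ := Module.Flat.exists_smul_eq_of_smul_eq_zero
    (fun _ ↦ piX_pow_dvd_of_piX_pow_mul_eq_zero hje) hx
  have hπ (v : E) : π ^ (j - 1) • π ^ (e - j) • v = π ^ (e - 1) • v := by
    rw [smul_smul, ← pow_add, show j - 1 + (e - j) = e - 1 by omega]
  refine ⟨⟨z, (hπ z).symm⟩, fun y hy ↦ ?_⟩
  obtain ⟨w, rfl⟩ : ∃ w : E, z + π • w = y := by
    have hyz : π ^ (e - 1) • (y - z) = 0 := by rw [smul_sub, hy, hπ, sub_self]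
    obtain ⟨w, hw⟩ := Module.Flat.exists_smul_eq_of_smul_eq_zero
      (fun _ ↦ piX_pow_dvd_of_piX_pow_mul_eq_zero (Nat.sub_le e 1)) hyz
    rw [show e - (e - 1) = 1 by omega, pow_one] at hw
    exact ⟨w, by rw [hw, add_sub_cancel]⟩
  have hdiff :
      V (π ^ (e - j) • z) - π ^ (e - j) • V (z + π • w) = -(π ^ (e - j + 1) • V w) := by
    rw [map_add, hV, map_pow_smul_of_map_smul hV, smul_add, pow_succ, mul_smul]
    abel
  have hidx : j - 1 + (e - j + 1) = e := by omega
  rw [hdiff]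
  exact neg_mem (pow_smul_mem_of_smul_mem_pred hGπ hidx.le (by rw [hidx]; exact hVE w))
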